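/- arXiv:2406.17278 — 5 statements merged into one kernel-verified Lean document; each statement's English description precedes it below -/
import Mathlib

section
/- Let d₁, d₂ ≥ r ≥ 1, let A ∈ ℝ^{d₁×r} and B ∈ ℝ^{d₂×r} satisfy ‖AᵀA − I_r‖₂ ≤ δ and ‖BᵀB − I_r‖₂ ≤ δ. Let S_A and S_B be the positive semidefinite square roots of AᵀA and BᵀB respectively, and let U ∈ ℝ^{d₁×r}, V ∈ ℝ^{d₂×r} be matrices with UᵀU = I_r, A = U·S_A, VᵀV = I_r, B = V·S_B. Then for every matrix Q ∈ ℝ^{r×r}, ‖AQBᵀ − UQVᵀ‖₂ ≤ √2·δ·‖Q‖₂. -/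
open Matrix

/-- Spectral norm (largest singular value): operator norm of the induced map
between Euclidean spaces. -/
noncomputable def specNorm {m n : Type*} [Fintype m] [Fintype n] [DecidableEq n]
    (M : Matrix m n ℝ) : ℝ :=
  ‖LinearMap.toContinuousLinearMap (Matrix.toEuclideanLin M)‖

/-- Euclidean norm of a vector. -/
noncomputable def euclNorm {n : Type*} [Fintype n] (x : n → ℝ) : ℝ :=
  Real.sqrt (∑ i, x i ^ 2)

/-!
Since `A = U S_A` and `B = V S_B`, we have `A Q Bᵀ - U Q Vᵀ = U (S_A Q S_B - Q) Vᵀ`, and `U`, `Vᵀ`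
are contractions, so it suffices to bound `S_A Q S_B - Q`. For unit vectors `x`, `y` the number
`⟪(S_A Q S_B - Q) y, x⟫` is the pairing of `Q` with the matrix `S_A x ⊗ S_B y - x ⊗ y` of rank at
most two, whose trace norm is at most `√2` times its Frobenius norm. In eigenbases of `S_A` and
`S_B` that Frobenius norm is `‖(S_A ⊗ S_B - 1)(x ⊗ y)‖ ≤ max |λ μ - 1| ≤ δ`, because the
eigenvalues `λ`, `μ` are nonnegative with `|λ² - 1| ≤ δ` and `|μ² - 1| ≤ δ`.
-/

open scoped RealInnerProductSpace Matrix.Norms.L2Operator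

theorem add_le_sqrt_two_mul_sqrt_sq_add_sq (a b : ℝ) : a + b ≤ √2 * √(a ^ 2 + b ^ 2) := by
  rw [← Real.sqrt_mul zero_le_two]
  exact Real.le_sqrt_of_sq_le (by nlinarith [sq_nonneg (a - b)])

theorem abs_mul_sub_one_le {a b δ : ℝ} (ha : 0 ≤ a) (hb : 0 ≤ b) (ha' : |a ^ 2 - 1| ≤ δ)
    (hb' : |b ^ 2 - 1| ≤ δ) : |a * b - 1| ≤ δ := by
  rw [abs_le] at *
  refine ⟨?_, by nlinarith [sq_nonneg (a - b)]⟩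
  rcases le_total δ 1 with h | h
  · have : (1 - δ) ^ 2 ≤ (a * b) ^ 2 := by
      rw [sq, mul_pow]
      exact mul_le_mul (by linarith) (by linarith) (by linarith) (sq_nonneg a)
    nlinarith [mul_nonneg ha hb]
  · nlinarith [mul_nonneg ha hb]

/-- The left side is `‖(diag a ⊗ diag b - 1)(c ⊗ d)‖²`, expanded. -/
theorem sum_diagonal_tensor_sub_one_le {ι κ : Type*} [Fintype ι] [Fintype κ] {δ : ℝ}
    (a c : ι → ℝ) (b d : κ → ℝ) (hab : ∀ i j, |a i * b j - 1| ≤ δ) :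
    (∑ i, a i * c i * (a i * c i)) * (∑ j, b j * d j * (b j * d j))
        - 2 * ((∑ i, a i * c i * c i) * ∑ j, b j * d j * d j)
        + (∑ i, c i * c i) * ∑ j, d j * d j
      ≤ δ ^ 2 * ((∑ i, c i * c i) * ∑ j, d j * d j) := by
  simp only [Finset.sum_mul_sum]
  simp only [Finset.mul_sum, ← Finset.sum_sub_distrib, ← Finset.sum_add_distrib]
  refine Finset.sum_le_sum fun i _ => Finset.sum_le_sum fun j _ => ?_
  have := sq_le_sq.2 ((hab i j).trans (le_abs_self δ))
  nlinarith [mul_le_mul_of_nonneg_left this (sq_nonneg (c i * d j))]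

section InnerProductSpace

variable {E F : Type*} [NormedAddCommGroup E] [InnerProductSpace ℝ E]
  [NormedAddCommGroup F] [InnerProductSpace ℝ F]

theorem OrthonormalBasis.real_inner_eq_sum_repr_mul_repr {ι : Type*} [Fintype ι]
    (b : OrthonormalBasis ι ℝ E) (u v : E) : ⟪u, v⟫ = ∑ i, b.repr u i * b.repr v i := by
  simp only [OrthonormalBasis.repr_apply_apply, ← b.sum_inner_mul_inner u v, real_inner_comm u]

/-- Writing `u = ⟪u, x⟫ • x + u'` with `u' ⊥ x` splits `u ⊗ v - x ⊗ y` into the orthogonal rank-one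
pieces `x ⊗ (⟪u, x⟫ • v - y)` and `u' ⊗ v`; the square root is the norm of `u ⊗ v - x ⊗ y`. -/
theorem inner_apply_sub_inner_apply_le (Q : F →L[ℝ] E) (u x : E) (v y : F) (hx : ‖x‖ = 1) :
    ⟪Q v, u⟫ - ⟪Q y, x⟫ ≤
      √2 * ‖Q‖ * √(‖u‖ ^ 2 * ‖v‖ ^ 2 - 2 * (⟪u, x⟫ * ⟪v, y⟫) + ‖x‖ ^ 2 * ‖y‖ ^ 2) := by
  set p := ⟪u, x⟫
  set u' := u - p • x
  have hu' : ‖u'‖ ^ 2 = ‖u‖ ^ 2 - p ^ 2 := by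
    rw [norm_sub_sq_real, real_inner_smul_right, norm_smul, Real.norm_eq_abs, mul_pow, sq_abs, hx]
    ring
  have hsplit : ⟪Q v, u⟫ - ⟪Q y, x⟫ = ⟪Q (p • v - y), x⟫ + ⟪Q v, u'⟫ := by
    simp only [u', map_sub, map_smul, inner_sub_right, real_inner_smul_right, real_inner_comm x]
    ring
  have hsq : ‖p • v - y‖ ^ 2 + (‖u'‖ * ‖v‖) ^ 2
      = ‖u‖ ^ 2 * ‖v‖ ^ 2 - 2 * (p * ⟪v, y⟫) + ‖x‖ ^ 2 * ‖y‖ ^ 2 := by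
    rw [norm_sub_sq_real, real_inner_smul_left, norm_smul, Real.norm_eq_abs, mul_pow, mul_pow,
      sq_abs, hu', hx]
    ring
  calc ⟪Q v, u⟫ - ⟪Q y, x⟫ = ⟪Q (p • v - y), x⟫ + ⟪Q v, u'⟫ := hsplit
    _ ≤ ‖Q (p • v - y)‖ * ‖x‖ + ‖Q v‖ * ‖u'‖ :=
      add_le_add (real_inner_le_norm _ _) (real_inner_le_norm _ _)
    _ ≤ ‖Q‖ * ‖p • v - y‖ + ‖Q‖ * ‖v‖ * ‖u'‖ := by
      rw [hx, mul_one]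
      gcongr <;> exact Q.le_opNorm _
    _ = ‖Q‖ * (‖p • v - y‖ + ‖u'‖ * ‖v‖) := by ring
    _ ≤ ‖Q‖ * (√2 * √(‖p • v - y‖ ^ 2 + (‖u'‖ * ‖v‖) ^ 2)) := by
      gcongr
      exact add_le_sqrt_two_mul_sqrt_sq_add_sq _ _
    _ = _ := by rw [hsq]; ring

namespace ContinuousLinearMap.IsPositive

variable [FiniteDimensional ℝ E] [FiniteDimensional ℝ F]

theorem apply_eigenvectorBasis {S : E →L[ℝ] E} (hS : S.IsPositive)
    (i : Fin (Module.finrank ℝ E)) :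
    S (hS.isSymmetric.eigenvectorBasis rfl i) =
      hS.isSymmetric.eigenvalues rfl i • hS.isSymmetric.eigenvectorBasis rfl i := by
  simpa only [coe_coe, RCLike.ofReal_real_eq_id, id] using
    hS.isSymmetric.apply_eigenvectorBasis rfl i

theorem eigenvectorBasis_repr_apply {S : E →L[ℝ] E} (hS : S.IsPositive) (x : E)
    (i : Fin (Module.finrank ℝ E)) :
    (hS.isSymmetric.eigenvectorBasis rfl).repr (S x) i =
      hS.isSymmetric.eigenvalues rfl i * (hS.isSymmetric.eigenvectorBasis rfl).repr x i := by
  simpa only [coe_coe, RCLike.ofReal_real_eq_id, id] using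
    hS.isSymmetric.eigenvectorBasis_apply_self_apply rfl x i

theorem abs_eigenvalues_sq_sub_one_le {S : E →L[ℝ] E} (hS : S.IsPositive)
    (i : Fin (Module.finrank ℝ E)) :
    |hS.isSymmetric.eigenvalues rfl i ^ 2 - 1| ≤ ‖S * S - 1‖ := by
  have hb : (S * S - 1) (hS.isSymmetric.eigenvectorBasis rfl i) =
      (hS.isSymmetric.eigenvalues rfl i ^ 2 - 1) • hS.isSymmetric.eigenvectorBasis rfl i := by
    simp [hS.apply_eigenvectorBasis, sq, sub_smul, smul_smul]
  simpa [hb, norm_smul] using (S * S - 1).le_opNorm (hS.isSymmetric.eigenvectorBasis rfl i)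

variable {S : E →L[ℝ] E} {T : F →L[ℝ] F} {δ : ℝ}

/-- The left side is `‖S x ⊗ T y - x ⊗ y‖²`. -/
theorem sq_norm_tensor_sub_le (hS : S.IsPositive) (hT : T.IsPositive) (hSδ : ‖S * S - 1‖ ≤ δ)
    (hTδ : ‖T * T - 1‖ ≤ δ) (x : E) (y : F) :
    ‖S x‖ ^ 2 * ‖T y‖ ^ 2 - 2 * (⟪S x, x⟫ * ⟪T y, y⟫) + ‖x‖ ^ 2 * ‖y‖ ^ 2
      ≤ δ ^ 2 * (‖x‖ ^ 2 * ‖y‖ ^ 2) := by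
  have hab : ∀ i j,
      |hS.isSymmetric.eigenvalues rfl i * hT.isSymmetric.eigenvalues rfl j - 1| ≤ δ :=
    fun i j => abs_mul_sub_one_le (hS.toLinearMap.nonneg_eigenvalues rfl i)
      (hT.toLinearMap.nonneg_eigenvalues rfl j) ((hS.abs_eigenvalues_sq_sub_one_le i).trans hSδ)
      ((hT.abs_eigenvalues_sq_sub_one_le j).trans hTδ)
  simp only [← real_inner_self_eq_norm_sq,
    (hS.isSymmetric.eigenvectorBasis rfl).real_inner_eq_sum_repr_mul_repr,
    (hT.isSymmetric.eigenvectorBasis rfl).real_inner_eq_sum_repr_mul_repr,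
    hS.eigenvectorBasis_repr_apply, hT.eigenvectorBasis_repr_apply]
  exact sum_diagonal_tensor_sub_one_le _ _ _ _ hab

theorem norm_comp_comp_sub_le (hS : S.IsPositive) (hT : T.IsPositive) (hSδ : ‖S * S - 1‖ ≤ δ)
    (hTδ : ‖T * T - 1‖ ≤ δ) (Q : F →L[ℝ] E) : ‖S ∘L Q ∘L T - Q‖ ≤ √2 * δ * ‖Q‖ := by
  have hδ : 0 ≤ δ := (norm_nonneg _).trans hSδ
  refine opNorm_le_of_re_inner_le (by positivity) fun y x hy hx => ?_
  calc ⟪(S ∘L Q ∘L T - Q) y, x⟫ = ⟪Q (T y), S x⟫ - ⟪Q y, x⟫ := by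
        rw [_root_.sub_apply, inner_sub_left, comp_apply, comp_apply, hS.inner_left_eq_inner_right]
    _ ≤ √2 * ‖Q‖ * √(‖S x‖ ^ 2 * ‖T y‖ ^ 2 - 2 * (⟪S x, x⟫ * ⟪T y, y⟫) + ‖x‖ ^ 2 * ‖y‖ ^ 2) :=
      inner_apply_sub_inner_apply_le Q (S x) x (T y) y hx
    _ ≤ √2 * ‖Q‖ * √(δ ^ 2) := by
      gcongr
      simpa [hx, hy] using hS.sq_norm_tensor_sub_le hT hSδ hTδ x y
    _ = √2 * δ * ‖Q‖ := by rw [Real.sqrt_sq hδ]; ring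

end ContinuousLinearMap.IsPositive

end InnerProductSpace

section Matrix

variable {m n : Type*} [Fintype m] [Fintype n] [DecidableEq n]

theorem specNorm_eq_l2_opNorm (M : Matrix m n ℝ) : specNorm M = ‖M‖ := rfl

theorem toContinuousLinearMap_toEuclideanLin_mul {l : Type*} [Fintype l] [DecidableEq l]
    (M : Matrix m n ℝ) (N : Matrix n l ℝ) :
    LinearMap.toContinuousLinearMap (toEuclideanLin (M * N)) =
      LinearMap.toContinuousLinearMap (toEuclideanLin M) ∘L
        LinearMap.toContinuousLinearMap (toEuclideanLin N) := by
  ext1 x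
  simp

theorem toContinuousLinearMap_toEuclideanLin_one :
    LinearMap.toContinuousLinearMap (toEuclideanLin (1 : Matrix n n ℝ)) = 1 := by
  ext1 x
  simp

theorem norm_le_one_of_transpose_mul_self_eq_one {U : Matrix m n ℝ} (hU : Uᵀ * U = 1) :
    ‖U‖ ≤ 1 := by
  have h : ‖U‖ * ‖U‖ ≤ 1 := by
    rw [← l2_opNorm_conjTranspose_mul_self, conjTranspose_eq_transpose_of_trivial, hU,
      cstar_norm_def, map_one]
    exact ContinuousLinearMap.norm_id_le
  nlinarith [norm_nonneg U]

theorem specNorm_mul_mul_transpose_le [DecidableEq m] {l k : Type*} [Fintype l] [Fintype k]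
    [DecidableEq k] {U : Matrix l m ℝ} {V : Matrix k n ℝ} (hU : Uᵀ * U = 1) (hV : Vᵀ * V = 1)
    (N : Matrix m n ℝ) : specNorm (U * N * Vᵀ) ≤ specNorm N := by
  simp only [specNorm_eq_l2_opNorm]
  calc ‖U * N * Vᵀ‖ ≤ ‖U‖ * ‖N‖ * ‖Vᵀ‖ :=
        (l2_opNorm_mul _ _).trans (by gcongr; exact l2_opNorm_mul _ _)
    _ ≤ 1 * ‖N‖ * 1 := by
      rw [← conjTranspose_eq_transpose_of_trivial, l2_opNorm_conjTranspose]
      gcongr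
      exacts [norm_le_one_of_transpose_mul_self_eq_one hU,
        norm_le_one_of_transpose_mul_self_eq_one hV]
    _ = ‖N‖ := by ring

theorem Matrix.PosSemidef.specNorm_mul_mul_sub_le [DecidableEq m] {S : Matrix m m ℝ}
    {T : Matrix n n ℝ} {δ : ℝ} (hS : S.PosSemidef) (hT : T.PosSemidef)
    (hSδ : specNorm (S * S - 1) ≤ δ) (hTδ : specNorm (T * T - 1) ≤ δ) (Q : Matrix m n ℝ) :
    specNorm (S * Q * T - Q) ≤ √2 * δ * specNorm Q := by
  have hS' := (LinearMap.isPositive_toContinuousLinearMap_iff _).2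
    (isPositive_toEuclideanLin_iff.2 hS)
  have hT' := (LinearMap.isPositive_toContinuousLinearMap_iff _).2
    (isPositive_toEuclideanLin_iff.2 hT)
  simp only [specNorm, map_sub, toContinuousLinearMap_toEuclideanLin_mul,
    toContinuousLinearMap_toEuclideanLin_one, ← ContinuousLinearMap.mul_def,
    ContinuousLinearMap.comp_assoc] at hSδ hTδ ⊢
  exact hS'.norm_comp_comp_sub_le hT' hSδ hTδ _

end Matrix

theorem stmt_1_general {d₁ d₂ r : ℕ} {δ : ℝ}
    (A U : Matrix (Fin d₁) (Fin r) ℝ) (B V : Matrix (Fin d₂) (Fin r) ℝ)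
    (SA SB : Matrix (Fin r) (Fin r) ℝ)
    (hδA : specNorm (Aᵀ * A - 1) ≤ δ) (hδB : specNorm (Bᵀ * B - 1) ≤ δ)
    (hSApsd : SA.PosSemidef) (hSAsq : SA * SA = Aᵀ * A)
    (hSBpsd : SB.PosSemidef) (hSBsq : SB * SB = Bᵀ * B)
    (hU : Uᵀ * U = 1) (hAU : A = U * SA)
    (hV : Vᵀ * V = 1) (hBV : B = V * SB) :
    ∀ Q : Matrix (Fin r) (Fin r) ℝ,
      specNorm (A * Q * Bᵀ - U * Q * Vᵀ) ≤ Real.sqrt 2 * δ * specNorm Q := by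
  intro Q
  have hSB : SBᵀ = SB := (conjTranspose_eq_transpose_of_trivial SB).symm.trans hSBpsd.1
  have hfactor : A * Q * Bᵀ - U * Q * Vᵀ = U * (SA * Q * SB - Q) * Vᵀ := by
    simp only [hAU, hBV, transpose_mul, hSB, Matrix.mul_sub, Matrix.sub_mul, Matrix.mul_assoc]
  rw [hfactor]
  exact (specNorm_mul_mul_transpose_le hU hV _).trans
    (hSApsd.specNorm_mul_mul_sub_le hSBpsd (hSAsq ▸ hδA) (hSBsq ▸ hδB) Q)

theorem stmt_1 {d₁ d₂ r : ℕ} (hr : 1 ≤ r) (hrd₁ : r ≤ d₁) (hrd₂ : r ≤ d₂) {δ : ℝ}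
    (A U : Matrix (Fin d₁) (Fin r) ℝ) (B V : Matrix (Fin d₂) (Fin r) ℝ)
    (SA SB : Matrix (Fin r) (Fin r) ℝ)
    (hδA : specNorm (Aᵀ * A - 1) ≤ δ) (hδB : specNorm (Bᵀ * B - 1) ≤ δ)
    (hSApsd : SA.PosSemidef) (hSAsq : SA * SA = Aᵀ * A)
    (hSBpsd : SB.PosSemidef) (hSBsq : SB * SB = Bᵀ * B)
    (hU : Uᵀ * U = 1) (hAU : A = U * SA)
    (hV : Vᵀ * V = 1) (hBV : B = V * SB) :
    ∀ Q : Matrix (Fin r) (Fin r) ℝ,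
      specNorm (A * Q * Bᵀ - U * Q * Vᵀ) ≤ Real.sqrt 2 * δ * specNorm Q :=
  stmt_1_general A U B V SA SB hδA hδB hSApsd hSAsq hSBpsd hSBsq hU hAU hV hBV
end

section
/- Let M ∈ ℝ^{d₁×d₂} be a matrix with Frobenius norm ‖M‖_F = 1, let a ∈ ℝ^{d₁} and b ∈ ℝ^{d₂} be unit vectors, and let â ∈ ℝ^{d₁} be a top left singular vector of M, i.e. a unit vector with ‖Mᵀâ‖₂ = ‖M‖₂. Then min( ‖ââᵀ − aaᵀ‖₂² , 1/2 ) ≤ ‖vec(M)·vec(M)ᵀ − vec(abᵀ)·vec(abᵀ)ᵀ‖₂², where for a d₁×d₂ matrix X, vec(X) ∈ ℝ^{d₁·d₂} denotes the vector of all entries of X (indexed by the pairs (i,j)). -/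
open Matrix

/-- Frobenius norm of a matrix. -/
noncomputable def frobNorm {m n : Type*} [Fintype m] [Fintype n] (M : Matrix m n ℝ) : ℝ :=
  Real.sqrt (∑ i, ∑ j, M i j ^ 2)

/-!
For unit vectors `u`, `v` the matrix `u uᵀ - v vᵀ` has squared spectral norm `1 - ⟨u, v⟩²`, and
`⟨vec M, vec (a bᵀ)⟩ = aᵀ M b`, so the claim reduces to `(aᵀ M b)² ≤ max (⟨â, a⟩²) (1/2)`, and by
Cauchy–Schwarz to the same bound on `‖Mᵀ a‖²`. Write `a = c â + w` with `c = ⟨â, a⟩` and `w ⊥ â`.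
Since `â` maximises `‖Mᵀ x‖` on the unit sphere, `Mᵀ â ⊥ Mᵀ w`, hence
`‖Mᵀ a‖² = c² σ² + ‖Mᵀ w‖²` with `σ = ‖M‖₂`. The operator norm gives `‖Mᵀ w‖² ≤ σ² ‖w‖²`, and
Bessel's inequality for `â, w / ‖w‖` on each column of `M`, together with `‖M‖_F = 1`, gives
`‖Mᵀ w‖² ≤ (1 - σ²) ‖w‖²`. As `‖w‖² = 1 - c²`, this leaves
`c² σ² + (1 - c²) min (σ², 1 - σ²) ≤ max (c², 1/2)`.
-/

open Matrix

section DotProduct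

variable {n : Type*} [Fintype n]

lemma dotProduct_self_nonneg (x : n → ℝ) : 0 ≤ x ⬝ᵥ x :=
  Finset.sum_nonneg fun i _ => mul_self_nonneg (x i)

lemma sq_dotProduct_le (x y : n → ℝ) : (x ⬝ᵥ y) ^ 2 ≤ (x ⬝ᵥ x) * (y ⬝ᵥ y) := by
  simpa only [dotProduct, sq] using Finset.sum_mul_sq_le_sq_mul_sq Finset.univ x y

lemma euclNorm_eq_sqrt (x : n → ℝ) : euclNorm x = √(x ⬝ᵥ x) := by
  simp only [euclNorm, dotProduct, sq]

lemma euclNorm_sq (x : n → ℝ) : euclNorm x ^ 2 = x ⬝ᵥ x := by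
  rw [euclNorm_eq_sqrt, Real.sq_sqrt (dotProduct_self_nonneg x)]

lemma dotProduct_self_eq_one {x : n → ℝ} (hx : euclNorm x = 1) : x ⬝ᵥ x = 1 := by
  rw [← euclNorm_sq, hx, one_pow]

lemma euclNorm_eq_norm (x : n → ℝ) : euclNorm x = ‖WithLp.toLp 2 x‖ := by
  simp [EuclideanSpace.norm_eq, euclNorm]

/-- Bessel's inequality for `x, w / ‖w‖`, proved as Cauchy–Schwarz for `w` and the component
`z - (z ⬝ᵥ x) • x` of `z` orthogonal to `x`. -/
lemma sq_dotProduct_le_of_orthogonal {x w : n → ℝ} (z : n → ℝ) (hx : x ⬝ᵥ x = 1)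
    (hxw : x ⬝ᵥ w = 0) : (z ⬝ᵥ w) ^ 2 ≤ (z ⬝ᵥ z - (z ⬝ᵥ x) ^ 2) * (w ⬝ᵥ w) := by
  have h := sq_dotProduct_le (z - (z ⬝ᵥ x) • x) w
  simp only [sub_dotProduct, dotProduct_sub, smul_dotProduct, dotProduct_smul, smul_eq_mul,
    hx, hxw, dotProduct_comm x z] at h
  linarith

end DotProduct

section SpecNorm

variable {m n : Type*} [Fintype m] [Fintype n] [DecidableEq n]

lemma euclNorm_mulVec_le (A : Matrix m n ℝ) (x : n → ℝ) :
    euclNorm (A *ᵥ x) ≤ specNorm A * euclNorm x := by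
  rw [euclNorm_eq_norm, euclNorm_eq_norm]
  exact (LinearMap.toContinuousLinearMap (toEuclideanLin A)).le_opNorm (WithLp.toLp 2 x)

lemma specNorm_le {A : Matrix m n ℝ} {K : ℝ} (hK : 0 ≤ K)
    (h : ∀ x, euclNorm (A *ᵥ x) ≤ K * euclNorm x) : specNorm A ≤ K :=
  ContinuousLinearMap.opNorm_le_bound _ hK fun x => by
    simpa [euclNorm_eq_norm, toLpLin_apply] using h x.ofLp

lemma mulVec_dotProduct_self_le (A : Matrix m n ℝ) (x : n → ℝ) :
    A *ᵥ x ⬝ᵥ A *ᵥ x ≤ specNorm A ^ 2 * (x ⬝ᵥ x) := by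
  rw [← euclNorm_sq, ← euclNorm_sq, ← mul_pow]
  exact pow_le_pow_left₀ (Real.sqrt_nonneg _) (euclNorm_mulVec_le A x) 2

lemma specNorm_sq_eq {A : Matrix m n ℝ} {K : ℝ} {x₀ : n → ℝ}
    (hle : ∀ x, A *ᵥ x ⬝ᵥ A *ᵥ x ≤ K * (x ⬝ᵥ x)) (hx₀ : x₀ ⬝ᵥ x₀ = 1)
    (heq : A *ᵥ x₀ ⬝ᵥ A *ᵥ x₀ = K) : specNorm A ^ 2 = K := by
  have hK : 0 ≤ K := heq ▸ dotProduct_self_nonneg _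
  suffices specNorm A = √K by rw [this, Real.sq_sqrt hK]
  apply le_antisymm
  · refine specNorm_le (Real.sqrt_nonneg K) fun x => ?_
    rw [euclNorm_eq_sqrt, euclNorm_eq_sqrt, ← Real.sqrt_mul hK]
    exact Real.sqrt_le_sqrt (hle x)
  · simpa [euclNorm_eq_sqrt, hx₀, heq] using euclNorm_mulVec_le A x₀

lemma specNorm_transpose [DecidableEq m] (A : Matrix m n ℝ) :
    specNorm Aᵀ = specNorm A := by
  open scoped Matrix.Norms.L2Operator in
  have h := l2_opNorm_conjTranspose A
  rw [conjTranspose_eq_transpose_of_trivial] at h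
  exact h

end SpecNorm

section RankTwo

variable {n : Type*} [Fintype n] {u v : n → ℝ}

lemma vecMulVec_sub_vecMulVec_mulVec (u v x : n → ℝ) :
    (vecMulVec u u - vecMulVec v v) *ᵥ x = (u ⬝ᵥ x) • u - (v ⬝ᵥ x) • v := by
  simp only [sub_mulVec, vecMulVec_mulVec, op_smul_eq_smul]

lemma dotProduct_self_smul_sub_smul_le (hu : u ⬝ᵥ u = 1) (hv : v ⬝ᵥ v = 1) (x : n → ℝ) :
    ((u ⬝ᵥ x) • u - (v ⬝ᵥ x) • v) ⬝ᵥ ((u ⬝ᵥ x) • u - (v ⬝ᵥ x) • v) ≤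
      (1 - (u ⬝ᵥ v) ^ 2) * (x ⬝ᵥ x) := by
  set p := u ⬝ᵥ x
  set q := v ⬝ᵥ x
  set c := u ⬝ᵥ v
  have hc : c ^ 2 ≤ 1 := by simpa [hu, hv] using sq_dotProduct_le u v
  have hS : ((u ⬝ᵥ x) • u - (v ⬝ᵥ x) • v) ⬝ᵥ ((u ⬝ᵥ x) • u - (v ⬝ᵥ x) • v) =
      p ^ 2 + q ^ 2 - 2 * c * p * q := by
    simp only [sub_dotProduct, dotProduct_sub, smul_dotProduct, dotProduct_smul, smul_eq_mul,
      hu, hv, dotProduct_comm v u]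
    ring
  rw [hS]
  -- `z` is `1 - c²` times the orthogonal projection of `x` onto the span of `u` and `v`
  set z := (p - c * q) • u + (q - c * p) • v
  have hxz : x ⬝ᵥ z = p ^ 2 + q ^ 2 - 2 * c * p * q := by
    simp only [z, dotProduct_add, dotProduct_smul, smul_eq_mul, dotProduct_comm x u,
      dotProduct_comm x v]
    ring
  have hzz : z ⬝ᵥ z = (1 - c ^ 2) * (p ^ 2 + q ^ 2 - 2 * c * p * q) := by
    simp only [z, add_dotProduct, dotProduct_add, smul_dotProduct, dotProduct_smul, smul_eq_mul,
      hu, hv, dotProduct_comm v u]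
    ring
  have hcs := sq_dotProduct_le x z
  rw [hxz, hzz] at hcs
  have hS0 : 0 ≤ p ^ 2 + q ^ 2 - 2 * c * p * q := hS ▸ dotProduct_self_nonneg _
  rcases hS0.eq_or_lt with h0 | hpos
  · rw [← h0]
    exact mul_nonneg (by linarith) (dotProduct_self_nonneg x)
  · nlinarith

lemma specNorm_vecMulVec_sub_vecMulVec_sq [DecidableEq n] (hu : u ⬝ᵥ u = 1) (hv : v ⬝ᵥ v = 1) :
    specNorm (vecMulVec u u - vecMulVec v v) ^ 2 = 1 - (u ⬝ᵥ v) ^ 2 := by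
  refine specNorm_sq_eq (fun x => ?_) hu ?_ <;> rw [vecMulVec_sub_vecMulVec_mulVec]
  · exact dotProduct_self_smul_sub_smul_le hu hv x
  · simp only [sub_dotProduct, dotProduct_sub, smul_dotProduct, dotProduct_smul, smul_eq_mul,
      hu, hv, dotProduct_comm v u]
    ring

end RankTwo

lemma eq_zero_of_forall_mul_le_mul_sq {B K : ℝ} (h : ∀ s : ℝ, B * s ≤ K * s ^ 2) : B = 0 := by
  by_contra hB
  set t := 1 / (|K| + 1)
  have ht : 0 < t := by positivity
  have hKt : K * t < 1 := by
    rw [mul_one_div, div_lt_one (by positivity)]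
    linarith [le_abs_self K]
  have hB2 : 0 < B ^ 2 * t := by positivity
  nlinarith [h (B * t)]

lemma mul_add_le_max_of_le {t s W : ℝ} (hs : s ≤ 1) (h₁ : W ≤ s * (1 - t))
    (h₂ : W ≤ (1 - s) * (1 - t)) : t * s + W ≤ max t (1 / 2) := by
  rcases le_total s (1 / 2) with hs' | hs'
  · linarith [le_max_right t (1 / 2)]
  · nlinarith [le_max_left t (1 / 2), le_max_right t (1 / 2)]

section TopSingularVector

variable {m n : Type*} [Fintype m] [Fintype n] (A : Matrix m n ℝ)

lemma mulVec_dotProduct_mulVec_eq_zero_of_isMax {x w : n → ℝ}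
    (hmax : ∀ y, A *ᵥ y ⬝ᵥ A *ᵥ y ≤ (A *ᵥ x ⬝ᵥ A *ᵥ x) * (y ⬝ᵥ y)) (hx : x ⬝ᵥ x = 1)
    (hxw : x ⬝ᵥ w = 0) : A *ᵥ x ⬝ᵥ A *ᵥ w = 0 := by
  suffices 2 * (A *ᵥ x ⬝ᵥ A *ᵥ w) = 0 by linarith
  refine eq_zero_of_forall_mul_le_mul_sq (K := (A *ᵥ x ⬝ᵥ A *ᵥ x) * (w ⬝ᵥ w) -
    A *ᵥ w ⬝ᵥ A *ᵥ w) fun s => ?_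
  -- the term of `‖A (x + s • w)‖² ≤ ‖A x‖² ‖x + s • w‖²` linear in `s` must vanish
  have h := hmax (x + s • w)
  simp only [mulVec_add, mulVec_smul, add_dotProduct, dotProduct_add, smul_dotProduct,
    dotProduct_smul, smul_eq_mul, hx, hxw, dotProduct_comm w x,
    dotProduct_comm (A *ᵥ w) (A *ᵥ x)] at h
  linarith

lemma mulVec_dotProduct_self_eq_sum (y : n → ℝ) : A *ᵥ y ⬝ᵥ A *ᵥ y = ∑ i, (A i ⬝ᵥ y) ^ 2 := by
  simp only [dotProduct, sq]
  rfl

lemma mulVec_dotProduct_self_le_sum_mul (y : n → ℝ) :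
    A *ᵥ y ⬝ᵥ A *ᵥ y ≤ (∑ i, A i ⬝ᵥ A i) * (y ⬝ᵥ y) := by
  rw [mulVec_dotProduct_self_eq_sum, Finset.sum_mul]
  exact Finset.sum_le_sum fun i _ => sq_dotProduct_le _ _

lemma mulVec_dotProduct_self_le_of_orthogonal {x w : n → ℝ} (hx : x ⬝ᵥ x = 1)
    (hxw : x ⬝ᵥ w = 0) :
    A *ᵥ w ⬝ᵥ A *ᵥ w ≤ (∑ i, A i ⬝ᵥ A i - A *ᵥ x ⬝ᵥ A *ᵥ x) * (w ⬝ᵥ w) := by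
  rw [mulVec_dotProduct_self_eq_sum, mulVec_dotProduct_self_eq_sum, ← Finset.sum_sub_distrib,
    Finset.sum_mul]
  exact Finset.sum_le_sum fun i _ => sq_dotProduct_le_of_orthogonal _ hx hxw

theorem mulVec_dotProduct_self_le_max (hA : ∑ i, A i ⬝ᵥ A i = 1) {x a : n → ℝ}
    (hx : x ⬝ᵥ x = 1) (hmax : ∀ y, A *ᵥ y ⬝ᵥ A *ᵥ y ≤ (A *ᵥ x ⬝ᵥ A *ᵥ x) * (y ⬝ᵥ y))
    (ha : a ⬝ᵥ a = 1) : A *ᵥ a ⬝ᵥ A *ᵥ a ≤ max ((x ⬝ᵥ a) ^ 2) (1 / 2) := by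
  set c := x ⬝ᵥ a
  set w := a - c • x
  have hxw : x ⬝ᵥ w = 0 := by
    simp only [w, dotProduct_sub, dotProduct_smul, smul_eq_mul, hx, c]
    ring
  have hww : w ⬝ᵥ w = 1 - c ^ 2 := by
    simp only [w, sub_dotProduct, dotProduct_sub, smul_dotProduct, dotProduct_smul, smul_eq_mul,
      ha, hx, dotProduct_comm a x, c]
    ring
  have hcross := mulVec_dotProduct_mulVec_eq_zero_of_isMax A hmax hx hxw
  have hsplit : A *ᵥ a ⬝ᵥ A *ᵥ a = c ^ 2 * (A *ᵥ x ⬝ᵥ A *ᵥ x) + A *ᵥ w ⬝ᵥ A *ᵥ w := by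
    have hAa : A *ᵥ a = c • A *ᵥ x + A *ᵥ w := by
      rw [← mulVec_smul, ← mulVec_add, add_sub_cancel]
    simp only [hAa, add_dotProduct, dotProduct_add, smul_dotProduct, dotProduct_smul, smul_eq_mul,
      hcross, dotProduct_comm (A *ᵥ w) (A *ᵥ x)]
    ring
  rw [hsplit]
  refine mul_add_le_max_of_le ?_ (hww ▸ hmax w) ?_
  · simpa only [hA, hx, mul_one] using mulVec_dotProduct_self_le_sum_mul A x
  · simpa only [hA, hww] using mulVec_dotProduct_self_le_of_orthogonal A hx hxw

end TopSingularVector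

section Entries

variable {m n : Type*} [Fintype m] [Fintype n]

lemma frobNorm_sq (M : Matrix m n ℝ) : frobNorm M ^ 2 = ∑ j, Mᵀ j ⬝ᵥ Mᵀ j := by
  rw [frobNorm, Real.sq_sqrt (by positivity), Finset.sum_comm]
  simp only [dotProduct, transpose_apply, sq]

lemma entries_dotProduct_self (M : Matrix m n ℝ) :
    (fun p : m × n => M p.1 p.2) ⬝ᵥ (fun p : m × n => M p.1 p.2) = frobNorm M ^ 2 := by
  rw [frobNorm, Real.sq_sqrt (by positivity)]
  simp only [dotProduct, Fintype.sum_prod_type, sq]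

lemma entries_dotProduct_entries_mul (M : Matrix m n ℝ) (a : m → ℝ) (b : n → ℝ) :
    (fun p : m × n => M p.1 p.2) ⬝ᵥ (fun p : m × n => a p.1 * b p.2) = Mᵀ *ᵥ a ⬝ᵥ b := by
  rw [mulVec_transpose, ← dotProduct_mulVec]
  simp only [dotProduct, mulVec, Fintype.sum_prod_type, Finset.mul_sum]
  exact Finset.sum_congr rfl fun i _ => Finset.sum_congr rfl fun j _ => by ring

lemma entries_mul_dotProduct_self (a : m → ℝ) (b : n → ℝ) :
    (fun p : m × n => a p.1 * b p.2) ⬝ᵥ (fun p : m × n => a p.1 * b p.2) =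
      (a ⬝ᵥ a) * (b ⬝ᵥ b) := by
  simp only [dotProduct, Fintype.sum_prod_type, Finset.sum_mul_sum]
  exact Finset.sum_congr rfl fun i _ => Finset.sum_congr rfl fun j _ => by ring

end Entries

theorem stmt_2 {d₁ d₂ : ℕ} (M : Matrix (Fin d₁) (Fin d₂) ℝ)
    (a : Fin d₁ → ℝ) (b : Fin d₂ → ℝ) (ahat : Fin d₁ → ℝ)
    (hM : frobNorm M = 1) (ha : euclNorm a = 1) (hb : euclNorm b = 1)
    (hahat : euclNorm ahat = 1)
    (htop : euclNorm (Mᵀ *ᵥ ahat) = specNorm M) :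
    min (specNorm (vecMulVec ahat ahat - vecMulVec a a) ^ 2) (1 / 2) ≤
      specNorm
        (vecMulVec (fun p : Fin d₁ × Fin d₂ => M p.1 p.2)
            (fun p : Fin d₁ × Fin d₂ => M p.1 p.2) -
          vecMulVec (fun p : Fin d₁ × Fin d₂ => a p.1 * b p.2)
            (fun p : Fin d₁ × Fin d₂ => a p.1 * b p.2)) ^ 2 := by
  have ha₁ := dotProduct_self_eq_one ha
  have hb₁ := dotProduct_self_eq_one hb
  have hahat₁ := dotProduct_self_eq_one hahat
  have hM₁ := entries_dotProduct_self M
  have hab₁ := entries_mul_dotProduct_self a b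
  rw [hM, one_pow] at hM₁
  rw [ha₁, hb₁, one_mul] at hab₁
  have hmax (y : Fin d₁ → ℝ) : Mᵀ *ᵥ y ⬝ᵥ Mᵀ *ᵥ y ≤ (Mᵀ *ᵥ ahat ⬝ᵥ Mᵀ *ᵥ ahat) * (y ⬝ᵥ y) := by
    simpa only [specNorm_transpose, ← htop, euclNorm_sq] using mulVec_dotProduct_self_le Mᵀ y
  have hcols : ∑ j, Mᵀ j ⬝ᵥ Mᵀ j = 1 := by rw [← frobNorm_sq, hM, one_pow]
  have hcorr : (Mᵀ *ᵥ a ⬝ᵥ b) ^ 2 ≤ max ((ahat ⬝ᵥ a) ^ 2) (1 / 2) :=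
    calc _ ≤ (Mᵀ *ᵥ a ⬝ᵥ Mᵀ *ᵥ a) * (b ⬝ᵥ b) := sq_dotProduct_le _ _
      _ ≤ _ := by
        rw [hb₁, mul_one]
        exact mulVec_dotProduct_self_le_max Mᵀ hcols hahat₁ hmax ha₁
  rw [specNorm_vecMulVec_sub_vecMulVec_sq hahat₁ ha₁, specNorm_vecMulVec_sub_vecMulVec_sq hM₁ hab₁,
    entries_dotProduct_entries_mul, show (1 / 2 : ℝ) = 1 - 1 / 2 by norm_num, min_sub_sub_left]
  linarith
end

section
/- Let a, â ∈ ℝ^d be unit vectors and let r ≥ 1 be a real number. If ⟨a, â⟩ ≥ 1 − 1/(2r), then ‖â − a‖₂ ≤ ‖ââᵀ − aaᵀ‖₂ / √(1 − 1/(4r)). -/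
open Matrix

/-!
Put `δ = â - a` and `s = â + a`. The operator `ââᵀ - aaᵀ` maps `δ` to `(1 - ⟨a, â⟩) s`, while
`‖δ‖² = 2 (1 - ⟨a, â⟩)` and `‖s‖² = 2 (1 + ⟨a, â⟩)`. Hence `‖δ‖² ‖s‖ / 2 ≤ ‖ââᵀ - aaᵀ‖₂ ‖δ‖`,
i.e. `‖δ‖ ‖s‖ ≤ 2 ‖ââᵀ - aaᵀ‖₂`, and the hypothesis on `⟨a, â⟩` says exactly that
`‖s‖ ≥ 2 √(1 - 1/(4r))`.
-/

open InnerProductSpace RealInnerProductSpace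

section RankOne

variable {E : Type*} [NormedAddCommGroup E] [InnerProductSpace ℝ E]

theorem rankOne_sub_rankOne_apply_sub {u v : E} (hu : ‖u‖ = 1) (hv : ‖v‖ = 1) :
    (rankOne ℝ u u - rankOne ℝ v v) (u - v) = (1 - ⟪u, v⟫) • (u + v) := by
  have huu : ⟪u, u⟫ = 1 := by rw [real_inner_self_eq_norm_sq, hu, one_pow]
  have hvv : ⟪v, v⟫ = 1 := by rw [real_inner_self_eq_norm_sq, hv, one_pow]
  simp only [_root_.sub_apply, rankOne_apply, inner_sub_right, huu, hvv,
    real_inner_comm u v]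
  module

theorem norm_sub_mul_norm_add_le {u v : E} (hu : ‖u‖ = 1) (hv : ‖v‖ = 1) :
    ‖u - v‖ * ‖u + v‖ ≤ 2 * ‖rankOne ℝ u u - rankOne ℝ v v‖ := by
  have hsub : ‖u - v‖ ^ 2 = 2 * (1 - ⟪u, v⟫) := by
    rw [norm_sub_sq_real, hu, hv]; ring
  have himage : ‖u - v‖ ^ 2 * ‖u + v‖ ≤ 2 * ‖rankOne ℝ u u - rankOne ℝ v v‖ * ‖u - v‖ := by
    have h := (rankOne ℝ u u - rankOne ℝ v v).le_opNorm (u - v)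
    have hc : 0 ≤ 1 - ⟪u, v⟫ := by nlinarith [sq_nonneg ‖u - v‖]
    rw [rankOne_sub_rankOne_apply_sub hu hv, norm_smul, Real.norm_of_nonneg hc] at h
    rw [hsub]; linarith
  rcases (norm_nonneg (u - v)).eq_or_lt with h0 | hpos
  · rw [← h0, zero_mul]; positivity
  · nlinarith

theorem norm_sub_le_norm_rankOne_sub_div_sqrt {u v : E} (hu : ‖u‖ = 1) (hv : ‖v‖ = 1)
    {κ : ℝ} (hκ : 0 < κ) (h : 2 * κ - 1 ≤ ⟪u, v⟫) :
    ‖u - v‖ ≤ ‖rankOne ℝ u u - rankOne ℝ v v‖ / √κ := by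
  have hadd : 2 * √κ ≤ ‖u + v‖ := by
    have hsq : (2 * √κ) ^ 2 ≤ ‖u + v‖ ^ 2 := by
      rw [norm_add_sq_real, hu, hv, mul_pow, Real.sq_sqrt hκ.le]; linarith
    exact le_of_pow_le_pow_left₀ two_ne_zero (norm_nonneg _) hsq
  rw [le_div_iff₀ (Real.sqrt_pos.mpr hκ)]
  nlinarith [norm_sub_mul_norm_add_le hu hv, norm_nonneg (u - v)]

end RankOne

theorem euclNorm_eq_norm_toLp {n : Type*} [Fintype n] (x : n → ℝ) :
    euclNorm x = ‖WithLp.toLp 2 x‖ := by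
  simp [euclNorm, EuclideanSpace.norm_eq]

theorem specNorm_vecMulVec_sub_vecMulVec {n : Type*} [Fintype n] [DecidableEq n]
    (u v : n → ℝ) :
    specNorm (vecMulVec u u - vecMulVec v v) =
      ‖rankOne ℝ (WithLp.toLp 2 u) (WithLp.toLp 2 u) -
        rankOne ℝ (WithLp.toLp 2 v) (WithLp.toLp 2 v)‖ := by
  have hvecMulVec (w : n → ℝ) :
      vecMulVec w w = toEuclideanLin.symm (rankOne ℝ (WithLp.toLp 2 w) (WithLp.toLp 2 w)) := by
    rw [symm_toEuclideanLin_rankOne, star_trivial]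
  rw [specNorm, hvecMulVec u, hvecMulVec v, ← map_sub, LinearEquiv.apply_symm_apply]
  rfl

theorem stmt_8 {d : ℕ} (a ahat : Fin d → ℝ) (r : ℝ) (hr : 1 ≤ r)
    (ha : euclNorm a = 1) (hahat : euclNorm ahat = 1)
    (h : 1 - 1 / (2 * r) ≤ a ⬝ᵥ ahat) :
    euclNorm (fun i => ahat i - a i) ≤
      specNorm (vecMulVec ahat ahat - vecMulVec a a) / Real.sqrt (1 - 1 / (4 * r)) := by
  rw [euclNorm_eq_norm_toLp] at ha hahat
  have hκ : 0 < 1 - 1 / (4 * r) := by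
    rw [sub_pos, div_lt_one (by linarith)]; linarith
  have hinner : 2 * (1 - 1 / (4 * r)) - 1 ≤ ⟪WithLp.toLp 2 ahat, WithLp.toLp 2 a⟫ := by
    rw [EuclideanSpace.inner_toLp_toLp, star_trivial]
    convert h using 1; field_simp; ring
  rw [euclNorm_eq_norm_toLp, specNorm_vecMulVec_sub_vecMulVec]
  exact norm_sub_le_norm_rankOne_sub_div_sqrt hahat ha hκ hinner
end

section
/- Let K ≥ 1 and let G₁, …, G_K ∈ ℝ^{r×r} be matrices each of whose diagonal entries all equal 1. Let H ∈ ℝ^{r×r} be the entrywise product, H_{ij} = ∏_{k=1}^{K} (G_k)_{ij}. Then ‖H − I_r‖₂ ≤ ∏_{k=1}^{K} ‖G_k − I_r‖₂. -/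
/-!
Schur's inequality ‖A ⊙ B‖₂ ≤ ‖A‖₂ ‖B‖₂: the vector (A ⊙ B) v is the diagonal of
A · diag(v) · Bᵀ, so its Euclidean norm is at most the Frobenius norm of that product, and
‖X Y‖_F ≤ ‖X‖₂ ‖Y‖_F, applied once to A · (diag(v) Bᵀ) and once to B · diag(v), bounds it by
‖A‖₂ ‖B‖₂ ‖v‖. Because every G_k has unit diagonal, H − I is the Hadamard product of the
G_k − I, and the theorem follows by induction on the number of factors.
-/

open Matrix

section SpecNorm

variable {m n : Type*} [Fintype m] [Fintype n] [DecidableEq n]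

lemma specNorm_nonneg (M : Matrix m n ℝ) : 0 ≤ specNorm M :=
  norm_nonneg _

lemma sum_sq_mulVec_le_specNorm (M : Matrix m n ℝ) (v : n → ℝ) :
    ∑ i, (M *ᵥ v) i ^ 2 ≤ specNorm M ^ 2 * ∑ j, v j ^ 2 := by
  have h := (LinearMap.toContinuousLinearMap (toEuclideanLin M)).le_opNorm (WithLp.toLp 2 v)
  rw [← EuclideanSpace.real_norm_sq_eq (WithLp.toLp 2 (M *ᵥ v)),
    ← EuclideanSpace.real_norm_sq_eq (WithLp.toLp 2 v), ← mul_pow]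
  exact pow_le_pow_left₀ (norm_nonneg _) h 2

lemma specNorm_le_of_sum_sq_mulVec_le (M : Matrix m n ℝ) {c : ℝ} (hc : 0 ≤ c)
    (h : ∀ v : n → ℝ, ∑ i, (M *ᵥ v) i ^ 2 ≤ c ^ 2 * ∑ j, v j ^ 2) : specNorm M ≤ c := by
  refine ContinuousLinearMap.opNorm_le_bound _ hc fun x => ?_
  refine le_of_sq_le_sq ?_ (by positivity)
  rw [mul_pow, EuclideanSpace.real_norm_sq_eq, EuclideanSpace.real_norm_sq_eq]
  exact h x.ofLp

lemma sum_sq_mul_le_specNorm {l : Type*} [Fintype l] (A : Matrix m n ℝ) (B : Matrix n l ℝ) :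
    ∑ i, ∑ k, (A * B) i k ^ 2 ≤ specNorm A ^ 2 * ∑ j, ∑ k, B j k ^ 2 := by
  rw [Finset.sum_comm, Finset.sum_comm (f := fun j k => B j k ^ 2), Finset.mul_sum]
  exact Finset.sum_le_sum fun k _ => sum_sq_mulVec_le_specNorm A (fun j => B j k)

omit [Fintype m] in
lemma hadamard_mulVec_apply (A B : Matrix m n ℝ) (v : n → ℝ) (i : m) :
    ((A ⊙ B) *ᵥ v) i = (A * diagonal v * Bᵀ) i i := by
  simp only [mulVec, dotProduct, hadamard_apply, mul_apply, diagonal_apply, transpose_apply,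
    mul_ite, mul_zero, Finset.sum_ite_eq', Finset.mem_univ, if_true]
  exact Finset.sum_congr rfl fun j _ => by ring

lemma specNorm_hadamard_le (A B : Matrix m n ℝ) :
    specNorm (A ⊙ B) ≤ specNorm A * specNorm B := by
  refine specNorm_le_of_sum_sq_mulVec_le _ (mul_nonneg (specNorm_nonneg A) (specNorm_nonneg B))
    fun v => ?_
  have hdiagonal : ∑ i, ∑ j, diagonal v i j ^ 2 = ∑ j, v j ^ 2 := by
    simp [diagonal_apply, ite_pow]
  calc ∑ i, ((A ⊙ B) *ᵥ v) i ^ 2 = ∑ i, (A * (diagonal v * Bᵀ)) i i ^ 2 := by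
        simp only [hadamard_mulVec_apply, Matrix.mul_assoc]
    _ ≤ ∑ i, ∑ k, (A * (diagonal v * Bᵀ)) i k ^ 2 :=
        Finset.sum_le_sum fun i _ =>
          Finset.single_le_sum (fun k _ => sq_nonneg ((A * (diagonal v * Bᵀ)) i k))
            (Finset.mem_univ i)
    _ ≤ specNorm A ^ 2 * ∑ j, ∑ k, (diagonal v * Bᵀ) j k ^ 2 := sum_sq_mul_le_specNorm _ _
    _ = specNorm A ^ 2 * ∑ k, ∑ j, (B * diagonal v) k j ^ 2 := by
        rw [← diagonal_transpose v, ← transpose_mul, Finset.sum_comm, diagonal_transpose]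
        rfl
    _ ≤ specNorm A ^ 2 * (specNorm B ^ 2 * ∑ j, v j ^ 2) := by
        gcongr
        rw [← hdiagonal]
        exact sum_sq_mul_le_specNorm _ _
    _ = (specNorm A * specNorm B) ^ 2 * ∑ j, v j ^ 2 := by ring

lemma specNorm_of_prod_le_prod {ι : Type*} (M : ι → Matrix m n ℝ) {s : Finset ι}
    (hs : s.Nonempty) :
    specNorm (of fun i j => ∏ k ∈ s, M k i j) ≤ ∏ k ∈ s, specNorm (M k) := by
  induction hs using Finset.Nonempty.cons_induction with
  | singleton a => simp only [Finset.prod_singleton]; exact le_rfl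
  | cons a s ha hs ih =>
    calc specNorm (of fun i j => ∏ k ∈ s.cons a ha, M k i j)
        = specNorm (M a ⊙ of fun i j => ∏ k ∈ s, M k i j) := by
          congr 1; ext i j; exact Finset.prod_cons ha
      _ ≤ specNorm (M a) * ∏ k ∈ s, specNorm (M k) :=
        (specNorm_hadamard_le _ _).trans (by gcongr; exact specNorm_nonneg _)
      _ = ∏ k ∈ s.cons a ha, specNorm (M k) := by rw [Finset.prod_cons]

end SpecNorm

theorem stmt_12 {K r : ℕ} (hK : 1 ≤ K) (G : Fin K → Matrix (Fin r) (Fin r) ℝ)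
    (hdiag : ∀ k i, G k i i = 1) :
    specNorm ((Matrix.of fun i j => ∏ k, G k i j) - 1) ≤ ∏ k, specNorm (G k - 1) := by
  have hne : (Finset.univ : Finset (Fin K)).Nonempty := Finset.univ_nonempty_iff.mpr ⟨⟨0, hK⟩⟩
  have hsub : (of fun i j => ∏ k, G k i j) - 1 = of fun i j => ∏ k, (G k - 1) i j := by
    ext i j
    obtain rfl | hij := eq_or_ne i j
    · simp [hdiag, zero_pow (Nat.one_le_iff_ne_zero.mp hK)]
    · simp [one_apply_ne hij]
  rw [hsub]
  exact specNorm_of_prod_le_prod _ hne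
end

section
/- Let ξ₁, …, ξ_p be independent real random variables on a probability space, each satisfying E[ξᵢ] = 0, E[ξᵢ²] = 1, and E[ξᵢ⁴] ≤ κ (in particular each ξᵢ has finite fourth moment). Then for every matrix M ∈ ℝ^{p×p}, E[ ( Σ_{j,l=1}^{p} M_{jl} ξ_j ξ_l )² ] ≤ (κ + 2)·‖M‖_F² + (tr M)². -/
open Matrix

open MeasureTheory ProbabilityTheory

/-!
Expanding the square, `E[(ξᵀMξ)²] = ∑ M_ab M_cd E[ξ_a ξ_b ξ_c ξ_d]`, and by independence the
fourth joint moment is the sum of the three pairings `δ_ab δ_cd + δ_ac δ_bd + δ_ad δ_bc`, corrected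
on the diagonal `a = b = c = d` by the excess kurtosis `E[ξ_a⁴] - 3`. Summing against `M ⊗ M`,
the pairings give `(tr M)² + ‖M‖_F² + tr(M²)`, and `tr(M²) ≤ ‖M‖_F²`, while the diagonal
correction is at most `κ ∑_a M_aa² ≤ κ ‖M‖_F²`.
-/

open Finset

def standardFourthMoment {ι : Type*} [DecidableEq ι] (m : ι → ℝ) (a b c d : ι) : ℝ :=
  (if a = b ∧ c = d then 1 else 0) + (if a = c ∧ b = d then 1 else 0)
    + (if a = d ∧ b = c then 1 else 0) + (if a = b ∧ a = c ∧ a = d then m a - 3 else 0)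

lemma prod_multiset_map_count_univ {ι M : Type*} [Fintype ι] [DecidableEq ι] [CommMonoid M]
    (s : Multiset ι) (f : ι → M) : (s.map f).prod = ∏ i, f i ^ s.count i := by
  rw [prod_multiset_map_count]
  exact prod_subset (subset_univ _) fun i _ hi => by simp_all

section Matrix

variable {ι : Type*} [Fintype ι]

lemma sum_mul_standardFourthMoment [DecidableEq ι] (M : Matrix ι ι ℝ) (m : ι → ℝ) :
    ∑ a, ∑ b, ∑ c, ∑ d, M a b * M c d * standardFourthMoment m a b c d
      = trace M ^ 2 + ∑ a, ∑ b, M a b ^ 2 + ∑ a, ∑ b, M a b * M b a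
        + ∑ a, M a a ^ 2 * (m a - 3) := by
  simp only [standardFourthMoment, mul_add, sum_add_distrib, ite_and, mul_ite, mul_zero, mul_one,
    sum_ite_irrel, sum_const_zero, sum_ite_eq, mem_univ, if_true]
  rw [trace, sq, sum_mul_sum]
  simp only [sq, mul_assoc, diag_apply]

lemma sum_mul_transpose_le_sum_sq (M : Matrix ι ι ℝ) :
    ∑ a, ∑ b, M a b * M b a ≤ ∑ a, ∑ b, M a b ^ 2 := by
  have hsq : ∑ a, ∑ b, (M a b - M b a) ^ 2
      = ∑ a, ∑ b, M a b ^ 2 + ∑ a, ∑ b, M b a ^ 2 - 2 * ∑ a, ∑ b, M a b * M b a := by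
    simp only [sub_sq, sum_add_distrib, sum_sub_distrib, mul_sum, mul_assoc]
    ring
  rw [sum_comm (f := fun a b => M b a ^ 2)] at hsq
  have : 0 ≤ ∑ a, ∑ b, (M a b - M b a) ^ 2 := by positivity
  linarith

lemma sum_diag_sq_mul_sub_three_le {κ : ℝ} (M : Matrix ι ι ℝ) {m : ι → ℝ} (hm0 : ∀ a, 0 ≤ m a)
    (hmκ : ∀ a, m a ≤ κ) :
    ∑ a, M a a ^ 2 * (m a - 3) ≤ κ * ∑ a, ∑ b, M a b ^ 2 := by
  rw [mul_sum]
  refine sum_le_sum fun a _ => ?_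
  have hκ : 0 ≤ κ := (hm0 a).trans (hmκ a)
  calc M a a ^ 2 * (m a - 3) ≤ κ * M a a ^ 2 := by nlinarith [sq_nonneg (M a a), hmκ a]
    _ ≤ κ * ∑ b, M a b ^ 2 :=
      mul_le_mul_of_nonneg_left (single_le_sum (fun b _ => sq_nonneg (M a b)) (mem_univ a)) hκ

end Matrix

section Moments

variable {Ω ι : Type*} [MeasurableSpace Ω] {μ : Measure Ω}

lemma memLp_two_mul_of_integrable_pow_four {f g : Ω → ℝ} (hf : AEStronglyMeasurable f μ)
    (hg : AEStronglyMeasurable g μ) (hf4 : Integrable (fun ω => f ω ^ 4) μ)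
    (hg4 : Integrable (fun ω => g ω ^ 4) μ) : MemLp (fun ω => f ω * g ω) 2 μ := by
  have hsq {h : Ω → ℝ} (hh : AEStronglyMeasurable h μ) (hh4 : Integrable (fun ω => h ω ^ 4) μ) :
      MemLp (fun ω => h ω ^ 2) 2 μ :=
    (memLp_two_iff_integrable_sq (f := fun ω => h ω ^ 2) (hh.pow 2)).2
      (by simpa only [← pow_mul] using hh4)
  rw [memLp_two_iff_integrable_sq (f := fun ω => f ω * g ω) (hf.mul hg)]
  simpa only [Pi.mul_def, mul_pow] using (hsq hf hf4).integrable_mul (hsq hg hg4)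

lemma integral_sq_sum_mul_mul [Fintype ι] {ξ : ι → Ω → ℝ}
    (hmeas : ∀ i, AEStronglyMeasurable (ξ i) μ) (hint : ∀ i, Integrable (fun ω => ξ i ω ^ 4) μ)
    (M : Matrix ι ι ℝ) :
    ∫ ω, (∑ j, ∑ l, M j l * ξ j ω * ξ l ω) ^ 2 ∂μ
      = ∑ a, ∑ b, ∑ c, ∑ d, M a b * M c d * ∫ ω, ξ a ω * ξ b ω * ξ c ω * ξ d ω ∂μ := by
  have hprod_int (a b c d : ι) : Integrable (fun ω => ξ a ω * ξ b ω * ξ c ω * ξ d ω) μ := by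
    simpa only [Pi.mul_def, mul_assoc] using
      (memLp_two_mul_of_integrable_pow_four (hmeas a) (hmeas b) (hint a) (hint b)).integrable_mul
        (memLp_two_mul_of_integrable_pow_four (hmeas c) (hmeas d) (hint c) (hint d))
  have hexp (ω : Ω) : (∑ j, ∑ l, M j l * ξ j ω * ξ l ω) ^ 2
      = ∑ a, ∑ b, ∑ c, ∑ d, M a b * M c d * (ξ a ω * ξ b ω * ξ c ω * ξ d ω) := by
    simp only [sq, sum_mul, mul_sum]
    exact sum_congr rfl fun a _ => sum_congr rfl fun b _ => sum_congr rfl fun c _ =>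
      sum_congr rfl fun d _ => by ring
  simp_rw [hexp]
  rw [integral_finsetSum _ fun a _ => by fun_prop]
  refine sum_congr rfl fun a _ => ?_
  rw [integral_finsetSum _ fun b _ => by fun_prop]
  refine sum_congr rfl fun b _ => ?_
  rw [integral_finsetSum _ fun c _ => by fun_prop]
  refine sum_congr rfl fun c _ => ?_
  rw [integral_finsetSum _ fun d _ => by fun_prop]
  exact sum_congr rfl fun d _ => integral_const_mul _ _

variable [Fintype ι] [DecidableEq ι] {ξ : ι → Ω → ℝ}

lemma ProbabilityTheory.iIndepFun.integral_prod_map_eq_prod_integral_pow_count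
    (hindep : iIndepFun ξ μ) (hmeas : ∀ i, AEMeasurable (ξ i) μ) (s : Multiset ι) :
    ∫ ω, (s.map (ξ · ω)).prod ∂μ = ∏ i, ∫ ω, ξ i ω ^ s.count i ∂μ := by
  simp_rw [prod_multiset_map_count_univ]
  exact hindep.integral_fun_prod_comp (f := fun i (x : ℝ) => x ^ s.count i) hmeas
    (fun i => (continuous_pow _).aestronglyMeasurable)

lemma ProbabilityTheory.iIndepFun.integral_mul_mul_mul_eq_standardFourthMoment
    (hindep : iIndepFun ξ μ) (hmeas : ∀ i, AEMeasurable (ξ i) μ)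
    (hmean : ∀ i, ∫ ω, ξ i ω ∂μ = 0) (hvar : ∀ i, ∫ ω, ξ i ω ^ 2 ∂μ = 1) (a b c d : ι) :
    ∫ ω, ξ a ω * ξ b ω * ξ c ω * ξ d ω ∂μ
      = standardFourthMoment (fun i => ∫ ω, ξ i ω ^ 4 ∂μ) a b c d := by
  have hprod (ω : Ω) :
      ξ a ω * ξ b ω * ξ c ω * ξ d ω = (({a, b, c, d} : Multiset ι).map (ξ · ω)).prod := by
    simp [mul_assoc]
  simp_rw [hprod, hindep.integral_prod_map_eq_prod_integral_pow_count hmeas]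
  have := hindep.isProbabilityMeasure
  rw [← prod_subset (subset_univ ({a, b, c, d} : Finset ι)) fun i _ hi => by simp_all]
  clear hprod
  -- once it is fixed which of `a, b, c, d` coincide, the product has a factor `E ξ_i = 0` unless
  -- every multiplicity is `2` (giving `1`) or `a = b = c = d` (giving the fourth moment)
  by_cases hab : a = b <;> by_cases hac : a = c <;> by_cases had : a = d <;>
    by_cases hbc : b = c <;> by_cases hbd : b = d <;> by_cases hcd : c = d <;>
    subst_vars <;> simp [standardFourthMoment, Multiset.count_cons, eq_comm, *] <;> ring

end Moments

theorem stmt_15_general {Ω : Type*} [MeasurableSpace Ω] (μ : Measure Ω) {p : ℕ}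
    (ξ : Fin p → Ω → ℝ) (κ : ℝ)
    (hmeas : ∀ i, Measurable (ξ i))
    (hindep : iIndepFun ξ μ)
    (hint : ∀ i, Integrable (fun ω => ξ i ω ^ 4) μ)
    (hmean : ∀ i, ∫ ω, ξ i ω ∂μ = 0)
    (hvar : ∀ i, ∫ ω, ξ i ω ^ 2 ∂μ = 1)
    (hfour : ∀ i, ∫ ω, ξ i ω ^ 4 ∂μ ≤ κ)
    (M : Matrix (Fin p) (Fin p) ℝ) :
    ∫ ω, (∑ j, ∑ l, M j l * ξ j ω * ξ l ω) ^ 2 ∂μ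
      ≤ (κ + 2) * frobNorm M ^ 2 + Matrix.trace M ^ 2 := by
  have hfrob : frobNorm M ^ 2 = ∑ a, ∑ b, M a b ^ 2 := Real.sq_sqrt (by positivity)
  have hfour_nonneg (i : Fin p) : 0 ≤ ∫ ω, ξ i ω ^ 4 ∂μ := integral_nonneg fun ω => by positivity
  rw [integral_sq_sum_mul_mul (fun i => (hmeas i).aestronglyMeasurable) hint M]
  simp_rw [hindep.integral_mul_mul_mul_eq_standardFourthMoment (fun i => (hmeas i).aemeasurable)
    hmean hvar]
  rw [sum_mul_standardFourthMoment, hfrob]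
  have hcross := sum_mul_transpose_le_sum_sq M
  have hdiag := sum_diag_sq_mul_sub_three_le M hfour_nonneg hfour
  linarith

theorem stmt_15 {Ω : Type*} [MeasurableSpace Ω] (μ : Measure Ω)
    [IsProbabilityMeasure μ] {p : ℕ} (ξ : Fin p → Ω → ℝ) (κ : ℝ)
    (hmeas : ∀ i, Measurable (ξ i))
    (hindep : iIndepFun ξ μ)
    (hint : ∀ i, Integrable (fun ω => ξ i ω ^ 4) μ)
    (hmean : ∀ i, ∫ ω, ξ i ω ∂μ = 0)
    (hvar : ∀ i, ∫ ω, ξ i ω ^ 2 ∂μ = 1)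
    (hfour : ∀ i, ∫ ω, ξ i ω ^ 4 ∂μ ≤ κ)
    (M : Matrix (Fin p) (Fin p) ℝ) :
    ∫ ω, (∑ j, ∑ l, M j l * ξ j ω * ξ l ω) ^ 2 ∂μ
      ≤ (κ + 2) * frobNorm M ^ 2 + Matrix.trace M ^ 2 :=
  stmt_15_general μ ξ κ hmeas hindep hint hmean hvar hfour M
end
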